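/- Let α be a bijection (∐_i {x_{i1}, …, x_{i m_i}}) ∐ {z} → (∐_i {x_i}) ∐ {z_1, …, z_l} with l = (∑_i m_i) - k + 1, interpreted as a graph on nodes N_1, …, N_k by joining each input to its image. Then the resulting graph contains a closed loop if and only if there exists a nonempty sequence of indices t_1, …, t_n ∈ {1, …, k} such that for each 2 ≤ j ≤ n, α(x_{t_j b_j}) = x_{t_{j-1}} for some 1 ≤ b_j ≤ m_{t_j}, and α(x_{t_1 b_1}) = x_{t_n} for some 1 ≤ b_1 ≤ m_{t_1}. -/

import Mathlib

namespace KM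

/-! ### Shapes and variable sets (Kelly–Mac Lane) -/

/-- Shapes: formal objects built from `1`, `I`, `⊗` and `[ , ]`. -/
inductive Shape : Type where
  | unit : Shape                     -- I
  | one : Shape                      -- 1
  | tensor : Shape → Shape → Shape   -- ⊗
  | hom : Shape → Shape → Shape      -- [ , ]

/-- The variable set of a shape, as a list of signs (`true` = `+`, `false` = `−`). -/
def vset : Shape → List Bool
  | .unit => []
  | .one => [true]
  | .tensor T S => vset T ++ vset S
  | .hom T S => (vset T).map not ++ vset S

/-- `1 ⊗ ⋯ ⊗ 1` (m copies), with `1^{⊗0} = I`. -/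
def onePow : ℕ → Shape
  | 0 => .unit
  | n + 1 => .tensor (onePow n) .one

/-- `X_m = [1^{⊗m}, 1]`. -/
def Xm (m : ℕ) : Shape := .hom (onePow m) .one

/-- The type of variables (occurrences of `1`) of a shape. -/
def VarsOf : Shape → Type
  | .unit => Empty
  | .one => Unit
  | .tensor T S => VarsOf T ⊕ VarsOf S
  | .hom T S => VarsOf T ⊕ VarsOf S

/-- The variance (sign) of a variable of a shape. -/
def sgn : (T : Shape) → VarsOf T → Bool
  | .unit, x => x.elim
  | .one, _ => true
  | .tensor T S, x => Sum.elim (sgn T) (sgn S) x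
  | .hom T S, x => Sum.elim (fun v => ! sgn T v) (sgn S) x

/-- The variance of a variable in the twisted sum `v(T)^op ++ v(S)`. -/
def tsgn (T S : Shape) (x : VarsOf T ⊕ VarsOf S) : Bool :=
  Sum.elim (fun v => ! sgn T v) (sgn S) x

/-- A Kelly–Mac Lane graph `T → S`: a fixed-point free pairing (involution)
of the variables in the twisted sum `v(T)^op ++ v(S)` matching `+`'s with `−`'s. -/
structure KMGraph (T S : Shape) : Type where
  mate : VarsOf T ⊕ VarsOf S → VarsOf T ⊕ VarsOf S
  invol : ∀ x, mate (mate x) = x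
  nofix : ∀ x, mate x ≠ x
  sflip : ∀ x, tsgn T S (mate x) = ! tsgn T S x

/-- The identity graph `1 : T → T`. -/
def idG (T : Shape) : KMGraph T T where
  mate := Sum.elim Sum.inr Sum.inl
  invol := by rintro (v | v) <;> rfl
  nofix := by rintro (v | v) h <;> simp at h
  sflip := by rintro (v | v) <;> simp [tsgn]

/-- Associativity `a : (T ⊗ S) ⊗ R → T ⊗ (S ⊗ R)`. -/
def aG (T S R : Shape) : KMGraph (.tensor (.tensor T S) R) (.tensor T (.tensor S R)) where
  mate := fun x => match x with
    | .inl (.inl (.inl t)) => .inr (.inl t)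
    | .inl (.inl (.inr s)) => .inr (.inr (.inl s))
    | .inl (.inr r) => .inr (.inr (.inr r))
    | .inr (.inl t) => .inl (.inl (.inl t))
    | .inr (.inr (.inl s)) => .inl (.inl (.inr s))
    | .inr (.inr (.inr r)) => .inl (.inr r)
  invol := by rintro (((t | s) | r) | (t | (s | r))) <;> rfl
  nofix := by rintro (((t | s) | r) | (t | (s | r))) h <;> simp at h
  sflip := by rintro (((t | s) | r) | (t | (s | r))) <;> simp [tsgn, sgn, Sum.elim]

/-- Inverse associativity `a⁻¹ : T ⊗ (S ⊗ R) → (T ⊗ S) ⊗ R`. -/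
def aInvG (T S R : Shape) : KMGraph (.tensor T (.tensor S R)) (.tensor (.tensor T S) R) where
  mate := fun x => match x with
    | .inl (.inl t) => .inr (.inl (.inl t))
    | .inl (.inr (.inl s)) => .inr (.inl (.inr s))
    | .inl (.inr (.inr r)) => .inr (.inr r)
    | .inr (.inl (.inl t)) => .inl (.inl t)
    | .inr (.inl (.inr s)) => .inl (.inr (.inl s))
    | .inr (.inr r) => .inl (.inr (.inr r))
  invol := by rintro ((t | (s | r)) | ((t | s) | r)) <;> rfl
  nofix := by rintro ((t | (s | r)) | ((t | s) | r)) h <;> simp at h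
  sflip := by rintro ((t | (s | r)) | ((t | s) | r)) <;> simp [tsgn, sgn, Sum.elim]

/-- Unit `b : T ⊗ I → T`. -/
def bG (T : Shape) : KMGraph (.tensor T .unit) T where
  mate := fun x => match x with
    | .inl (.inl t) => .inr t
    | .inl (.inr e) => e.elim
    | .inr t => .inl (.inl t)
  invol := by rintro ((t | e) | t) <;> first | exact e.elim | rfl
  nofix := by rintro ((t | e) | t) h <;> first | exact e.elim | simp at h
  sflip := by rintro ((t | e) | t) <;> first | exact e.elim | simp [tsgn, sgn, Sum.elim]

/-- Inverse unit `b⁻¹ : T → T ⊗ I`. -/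
def bInvG (T : Shape) : KMGraph T (.tensor T .unit) where
  mate := fun x => match x with
    | .inl t => .inr (.inl t)
    | .inr (.inl t) => .inl t
    | .inr (.inr e) => e.elim
  invol := by rintro (t | (t | e)) <;> first | exact e.elim | rfl
  nofix := by rintro (t | (t | e)) h <;> first | exact e.elim | simp at h
  sflip := by rintro (t | (t | e)) <;> first | exact e.elim | simp [tsgn, sgn, Sum.elim]

/-- Symmetry `c : T ⊗ S → S ⊗ T`. -/
def cG (T S : Shape) : KMGraph (.tensor T S) (.tensor S T) where
  mate := fun x => match x with
    | .inl (.inl t) => .inr (.inr t)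
    | .inl (.inr s) => .inr (.inl s)
    | .inr (.inl s) => .inl (.inr s)
    | .inr (.inr t) => .inl (.inl t)
  invol := by rintro ((t | s) | (s | t)) <;> rfl
  nofix := by rintro ((t | s) | (s | t)) h <;> simp at h
  sflip := by rintro ((t | s) | (s | t)) <;> simp [tsgn, sgn, Sum.elim]

/-- `d : T → [S, T ⊗ S]`. -/
def dG (T S : Shape) : KMGraph T (.hom S (.tensor T S)) where
  mate := fun x => match x with
    | .inl t => .inr (.inr (.inl t))
    | .inr (.inl s) => .inr (.inr (.inr s))
    | .inr (.inr (.inl t)) => .inl t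
    | .inr (.inr (.inr s)) => .inr (.inl s)
  invol := by rintro (t | (s | (t | s))) <;> rfl
  nofix := by rintro (t | (s | (t | s))) h <;> simp [VarsOf] at h
  sflip := by rintro (t | (s | (t | s))) <;> simp [tsgn, sgn, Sum.elim]

/-- `e : [T, S] ⊗ T → S`. -/
def eG (T S : Shape) : KMGraph (.tensor (.hom T S) T) S where
  mate := fun x => match x with
    | .inl (.inl (.inl t)) => .inl (.inr t)
    | .inl (.inl (.inr s)) => .inr s
    | .inl (.inr t) => .inl (.inl (.inl t))
    | .inr s => .inl (.inl (.inr s))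
  invol := by rintro (((t | s) | t) | s) <;> rfl
  nofix := by rintro (((t | s) | t) | s) h <;> simp [VarsOf] at h
  sflip := by rintro (((t | s) | t) | s) <;> simp [tsgn, sgn, Sum.elim]


section TensorHom
variable {T T' S S' : Shape}

/-- relabelling of the variables of `f : T → T'` into those of `T ⊗ S → T' ⊗ S'`. -/
def rlf (T T' S S' : Shape) : VarsOf T ⊕ VarsOf T' → VarsOf (.tensor T S) ⊕ VarsOf (.tensor T' S') :=
  Sum.elim (fun a => .inl (.inl a)) (fun a => .inr (.inl a))

/-- relabelling of the variables of `g : S → S'` into those of `T ⊗ S → T' ⊗ S'`. -/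
def rlg (T T' S S' : Shape) : VarsOf S ⊕ VarsOf S' → VarsOf (.tensor T S) ⊕ VarsOf (.tensor T' S') :=
  Sum.elim (fun a => .inl (.inr a)) (fun a => .inr (.inr a))

def tmate (f : KMGraph T T') (g : KMGraph S S') :
    VarsOf (.tensor T S) ⊕ VarsOf (.tensor T' S') → VarsOf (.tensor T S) ⊕ VarsOf (.tensor T' S')
  | .inl (.inl t) => rlf T T' S S' (f.mate (.inl t))
  | .inl (.inr s) => rlg T T' S S' (g.mate (.inl s))
  | .inr (.inl t') => rlf T T' S S' (f.mate (.inr t'))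
  | .inr (.inr s') => rlg T T' S S' (g.mate (.inr s'))

lemma tmate_rlf (f : KMGraph T T') (g : KMGraph S S') (z : VarsOf T ⊕ VarsOf T') :
    tmate f g (rlf T T' S S' z) = rlf T T' S S' (f.mate z) := by cases z <;> rfl

lemma tmate_rlg (f : KMGraph T T') (g : KMGraph S S') (z : VarsOf S ⊕ VarsOf S') :
    tmate f g (rlg T T' S S' z) = rlg T T' S S' (g.mate z) := by cases z <;> rfl

lemma rlf_inj : Function.Injective (rlf T T' S S') := by
  rintro (a | a) (b | b) h <;> simp [rlf] at h <;> cases h <;> rfl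

lemma rlg_inj : Function.Injective (rlg T T' S S') := by
  rintro (a | a) (b | b) h <;> simp [rlg] at h <;> cases h <;> rfl

lemma tsgn_rlf (z : VarsOf T ⊕ VarsOf T') :
    tsgn (.tensor T S) (.tensor T' S') (rlf T T' S S' z) = tsgn T T' z := by
  cases z <;> rfl

lemma tsgn_rlg (z : VarsOf S ⊕ VarsOf S') :
    tsgn (.tensor T S) (.tensor T' S') (rlg T T' S S' z) = tsgn S S' z := by
  cases z <;> rfl

/-- Tensor product of graphs `f ⊗ g : T ⊗ S → T' ⊗ S'`. -/
def tensorG (f : KMGraph T T') (g : KMGraph S S') : KMGraph (.tensor T S) (.tensor T' S') where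
  mate := tmate f g
  invol := by
    rintro ((t | s) | (t' | s'))
    · show tmate f g (rlf T T' S S' (f.mate (.inl t))) = _
      rw [tmate_rlf, f.invol]; rfl
    · show tmate f g (rlg T T' S S' (g.mate (.inl s))) = _
      rw [tmate_rlg, g.invol]; rfl
    · show tmate f g (rlf T T' S S' (f.mate (.inr t'))) = _
      rw [tmate_rlf, f.invol]; rfl
    · show tmate f g (rlg T T' S S' (g.mate (.inr s'))) = _
      rw [tmate_rlg, g.invol]; rfl
  nofix := by
    rintro ((t | s) | (t' | s')) h
    · exact f.nofix (.inl t) (rlf_inj h)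
    · exact g.nofix (.inl s) (rlg_inj h)
    · exact f.nofix (.inr t') (rlf_inj h)
    · exact g.nofix (.inr s') (rlg_inj h)
  sflip := by
    rintro ((t | s) | (t' | s'))
    · show tsgn _ _ (rlf T T' S S' (f.mate (.inl t))) = _
      rw [tsgn_rlf, f.sflip]; rfl
    · show tsgn _ _ (rlg T T' S S' (g.mate (.inl s))) = _
      rw [tsgn_rlg, g.sflip]; rfl
    · show tsgn _ _ (rlf T T' S S' (f.mate (.inr t'))) = _
      rw [tsgn_rlf, f.sflip]; rfl
    · show tsgn _ _ (rlg T T' S S' (g.mate (.inr s'))) = _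
      rw [tsgn_rlg, g.sflip]; rfl

/-- relabelling of the variables of `f : T → T'` into those of `[T', S] → [T, S']`. -/
def hlf (T T' S S' : Shape) : VarsOf T ⊕ VarsOf T' → VarsOf (.hom T' S) ⊕ VarsOf (.hom T S') :=
  Sum.elim (fun a => .inr (.inl a)) (fun a => .inl (.inl a))

/-- relabelling of the variables of `g : S → S'` into those of `[T', S] → [T, S']`. -/
def hlg (T T' S S' : Shape) : VarsOf S ⊕ VarsOf S' → VarsOf (.hom T' S) ⊕ VarsOf (.hom T S') :=
  Sum.elim (fun a => .inl (.inr a)) (fun a => .inr (.inr a))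

def hmate (f : KMGraph T T') (g : KMGraph S S') :
    VarsOf (.hom T' S) ⊕ VarsOf (.hom T S') → VarsOf (.hom T' S) ⊕ VarsOf (.hom T S')
  | .inl (.inl t') => hlf T T' S S' (f.mate (.inr t'))
  | .inl (.inr s) => hlg T T' S S' (g.mate (.inl s))
  | .inr (.inl t) => hlf T T' S S' (f.mate (.inl t))
  | .inr (.inr s') => hlg T T' S S' (g.mate (.inr s'))

lemma hmate_hlf (f : KMGraph T T') (g : KMGraph S S') (z : VarsOf T ⊕ VarsOf T') :
    hmate f g (hlf T T' S S' z) = hlf T T' S S' (f.mate z) := by cases z <;> rfl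

lemma hmate_hlg (f : KMGraph T T') (g : KMGraph S S') (z : VarsOf S ⊕ VarsOf S') :
    hmate f g (hlg T T' S S' z) = hlg T T' S S' (g.mate z) := by cases z <;> rfl

lemma hlf_inj : Function.Injective (hlf T T' S S') := by
  rintro (a | a) (b | b) h <;> simp [hlf] at h <;> cases h <;> rfl

lemma hlg_inj : Function.Injective (hlg T T' S S') := by
  rintro (a | a) (b | b) h <;> simp [hlg] at h <;> cases h <;> rfl

lemma tsgn_hlf (z : VarsOf T ⊕ VarsOf T') :
    tsgn (.hom T' S) (.hom T S') (hlf T T' S S' z) = tsgn T T' z := by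
  cases z <;> simp [tsgn, sgn, hlf, Sum.elim]

lemma tsgn_hlg (z : VarsOf S ⊕ VarsOf S') :
    tsgn (.hom T' S) (.hom T S') (hlg T T' S S' z) = tsgn S S' z := by
  cases z <;> simp [tsgn, sgn, hlg, Sum.elim]

/-- `[f, g] : [T', S] → [T, S']` for graphs `f : T → T'`, `g : S → S'`. -/
def homG (f : KMGraph T T') (g : KMGraph S S') : KMGraph (.hom T' S) (.hom T S') where
  mate := hmate f g
  invol := by
    rintro ((t' | s) | (t | s'))
    · show hmate f g (hlf T T' S S' (f.mate (.inr t'))) = _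
      rw [hmate_hlf, f.invol]; rfl
    · show hmate f g (hlg T T' S S' (g.mate (.inl s))) = _
      rw [hmate_hlg, g.invol]; rfl
    · show hmate f g (hlf T T' S S' (f.mate (.inl t))) = _
      rw [hmate_hlf, f.invol]; rfl
    · show hmate f g (hlg T T' S S' (g.mate (.inr s'))) = _
      rw [hmate_hlg, g.invol]; rfl
  nofix := by
    rintro ((t' | s) | (t | s')) h
    · exact f.nofix (.inr t') (hlf_inj h)
    · exact g.nofix (.inl s) (hlg_inj h)
    · exact f.nofix (.inl t) (hlf_inj h)
    · exact g.nofix (.inr s') (hlg_inj h)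
  sflip := by
    rintro ((t' | s) | (t | s'))
    · show tsgn _ _ (hlf T T' S S' (f.mate (.inr t'))) = _
      rw [tsgn_hlf, f.sflip]
      show _ = ! tsgn (.hom T' S) (.hom T S') (hlf T T' S S' (.inr t'))
      rw [tsgn_hlf]
    · show tsgn _ _ (hlg T T' S S' (g.mate (.inl s))) = _
      rw [tsgn_hlg, g.sflip]
      show _ = ! tsgn (.hom T' S) (.hom T S') (hlg T T' S S' (.inl s))
      rw [tsgn_hlg]
    · show tsgn _ _ (hlf T T' S S' (f.mate (.inl t))) = _
      rw [tsgn_hlf, f.sflip]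
      show _ = ! tsgn (.hom T' S) (.hom T S') (hlf T T' S S' (.inl t))
      rw [tsgn_hlf]
    · show tsgn _ _ (hlg T T' S S' (g.mate (.inr s'))) = _
      rw [tsgn_hlg, g.sflip]
      show _ = ! tsgn (.hom T' S) (.hom T S') (hlg T T' S S' (.inr s'))
      rw [tsgn_hlg]

end TensorHom

/-! ### Composition of graphs, relationally -/

section Comp
variable (T S R : Shape)

/-- Inclusion of the variables of `T → S` into the variables of a composable pair. -/
def eTS : VarsOf T ⊕ VarsOf S → VarsOf T ⊕ VarsOf S ⊕ VarsOf R :=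
  Sum.elim Sum.inl (fun s => Sum.inr (Sum.inl s))

def eSR : VarsOf S ⊕ VarsOf R → VarsOf T ⊕ VarsOf S ⊕ VarsOf R :=
  Sum.elim (fun s => Sum.inr (Sum.inl s)) (fun r => Sum.inr (Sum.inr r))

def eTR : VarsOf T ⊕ VarsOf R → VarsOf T ⊕ VarsOf S ⊕ VarsOf R :=
  Sum.elim Sum.inl (fun r => Sum.inr (Sum.inr r))

variable {T S R}

/-- One step along the pairings of `f` or of `g`. -/
def Step (f : KMGraph T S) (g : KMGraph S R) (x y : VarsOf T ⊕ VarsOf S ⊕ VarsOf R) : Prop :=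
  (∃ u, eTS T S R u = x ∧ eTS T S R (f.mate u) = y) ∨
  (∃ u, eSR T S R u = x ∧ eSR T S R (g.mate u) = y)

/-- Two variables are connected if they are joined by an alternating path. -/
def Connected (f : KMGraph T S) (g : KMGraph S R) :
    (VarsOf T ⊕ VarsOf S ⊕ VarsOf R) → (VarsOf T ⊕ VarsOf S ⊕ VarsOf R) → Prop :=
  Relation.ReflTransGen (Step f g)

/-- `h` is the composite graph `g ∘ f`: it pairs `u` with `v` exactly when they are
joined by an alternating path through the variables of `S`. -/
def IsComposite (f : KMGraph T S) (g : KMGraph S R) (h : KMGraph T R) : Prop :=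
  ∀ u, Connected f g (eTR T S R u) (eTR T S R (h.mate u))

/-- `f` and `g` are compatible: composing them gives no closed loops, i.e. every
variable of `S` is linked to a variable of `T` or `R`. -/
def Compatible (f : KMGraph T S) (g : KMGraph S R) : Prop :=
  ∀ s : VarsOf S, ∃ u, Connected f g (Sum.inr (Sum.inl s)) (eTR T S R u)

end Comp

/-- The allowable morphisms: the smallest class of graphs containing `1, a, a⁻¹, b, b⁻¹, c, d, e`
and closed under `⊗`, `[ , ]` and composition. -/
inductive Allowable : {T S : Shape} → KMGraph T S → Prop
  | id (T : Shape) : Allowable (idG T)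
  | assoc (T S R : Shape) : Allowable (aG T S R)
  | assocInv (T S R : Shape) : Allowable (aInvG T S R)
  | unit (T : Shape) : Allowable (bG T)
  | unitInv (T : Shape) : Allowable (bInvG T)
  | braid (T S : Shape) : Allowable (cG T S)
  | dgen (T S : Shape) : Allowable (dG T S)
  | egen (T S : Shape) : Allowable (eG T S)
  | tensor {T T' S S' : Shape} {f : KMGraph T T'} {g : KMGraph S S'} :
      Allowable f → Allowable g → Allowable (tensorG f g)
  | homc {T T' S S' : Shape} {f : KMGraph T T'} {g : KMGraph S S'} :
      Allowable f → Allowable g → Allowable (homG f g)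
  | comp {T S R : Shape} {f : KMGraph T S} {g : KMGraph S R} {h : KMGraph T R} :
      Allowable f → Allowable g → IsComposite f g h → Allowable h

/-! ### Trees -/

/-- The data of a (combed) tree with `k` ordered nodes of arities `m 0, …, m (k-1)` and
`l` leaves: a bijection from node-inputs plus a root marker to node-outputs plus leaf markers. -/
abbrev TreeBij (k : ℕ) (m : Fin k → ℕ) (l : ℕ) : Type :=
  ((Σ i : Fin k, Fin (m i)) ⊕ Unit) ≃ (Fin k ⊕ Fin l)

/-- The loop condition: a nonempty cyclic sequence of node indices `t 0, …, t n` such that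
the `b j`-th input of node `t j` is attached to the output of node `t (j-1)` (cyclically). -/
def HasLoop {k : ℕ} {m : Fin k → ℕ} {l : ℕ} (α : TreeBij k m l) : Prop :=
  ∃ (n : ℕ) (t : Fin (n + 1) → Fin k) (b : (j : Fin (n + 1)) → Fin (m (t j))),
    ∀ j, α (Sum.inl ⟨t j, b j⟩) = Sum.inl (t (j - 1))

/-- A closed loop in the graph defined by `α` on the nodes `N_1, …, N_k`:
a closed walk along pairwise distinct edges.  An edge is a node input together with the node
output it is attached to under `α`; its endpoints are the two nodes involved. -/
def HasClosedLoop {k : ℕ} {m : Fin k → ℕ} {l : ℕ} (α : TreeBij k m l) : Prop :=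
  ∃ (n : ℕ) (v : Fin (n + 1) → Fin k) (e : Fin (n + 1) → Σ i : Fin k, Fin (m i)),
    Function.Injective e ∧
    ∀ j, ((e j).1 = v j ∧ α (Sum.inl (e j)) = Sum.inl (v (j + 1))) ∨
         ((e j).1 = v (j + 1) ∧ α (Sum.inl (e j)) = Sum.inl (v j))

/-! ### Trees as morphisms in K1 -/

/-- `X_{m 0} ⊗ ⋯ ⊗ X_{m (k-1)}` (associated to the right, with empty tensor `I`). -/
def domShape : (k : ℕ) → (Fin k → ℕ) → Shape
  | 0, _ => .unit
  | k + 1, m => .tensor (Xm (m 0)) (domShape k (fun i => m i.succ))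

/-- The `j`-th variable of `1^{⊗m}`. -/
def powVar : (m : ℕ) → Fin m → VarsOf (onePow m)
  | 0, j => j.elim0
  | m + 1, j => Fin.lastCases (Sum.inr ()) (fun i => Sum.inl (powVar m i)) j

/-- The variable of `X_{m 0} ⊗ ⋯ ⊗ X_{m (k-1)}` corresponding to the `j`-th input of the
`i`-th node. -/
def inputVar : (k : ℕ) → (m : Fin k → ℕ) → (i : Fin k) → Fin (m i) → VarsOf (domShape k m)
  | 0, _, i, _ => i.elim0
  | k + 1, m, i, j =>
    Fin.cases (motive := fun i => Fin (m i) → VarsOf (domShape (k + 1) m))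
      (fun j => Sum.inl (Sum.inl (powVar (m 0) j)))
      (fun i' j => Sum.inr (inputVar k (fun t => m t.succ) i' j)) i j

/-- The variable of `X_{m 0} ⊗ ⋯ ⊗ X_{m (k-1)}` corresponding to the output of the
`i`-th node. -/
def outputVar : (k : ℕ) → (m : Fin k → ℕ) → Fin k → VarsOf (domShape k m)
  | 0, _, i => i.elim0
  | k + 1, m, i =>
    Fin.cases (motive := fun _ => VarsOf (domShape (k + 1) m))
      (Sum.inl (Sum.inr ()))
      (fun i' => Sum.inr (outputVar k (fun t => m t.succ) i')) i

/-- The variable of `X_l` corresponding to the `p`-th leaf. -/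
def leafVar (l : ℕ) (p : Fin l) : VarsOf (Xm l) := Sum.inl (powVar l p)

/-- The variable of `X_l` corresponding to the root. -/
def rootVar (l : ℕ) : VarsOf (Xm l) := Sum.inr ()

/-- Node inputs and the root marker, as variables of the graph
`X_{m 0} ⊗ ⋯ ⊗ X_{m (k-1)} → X_l`. -/
def srcv (k : ℕ) (m : Fin k → ℕ) (l : ℕ) :
    ((Σ i : Fin k, Fin (m i)) ⊕ Unit) → VarsOf (domShape k m) ⊕ VarsOf (Xm l) :=
  Sum.elim (fun x => Sum.inl (inputVar k m x.1 x.2)) (fun _ => Sum.inr (rootVar l))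

/-- Node outputs and leaf markers, as variables of the graph
`X_{m 0} ⊗ ⋯ ⊗ X_{m (k-1)} → X_l`. -/
def targ (k : ℕ) (m : Fin k → ℕ) (l : ℕ) :
    (Fin k ⊕ Fin l) → VarsOf (domShape k m) ⊕ VarsOf (Xm l) :=
  Sum.elim (fun r => Sum.inl (outputVar k m r)) (fun p => Sum.inr (leafVar l p))

/-- The graph `ξ : X_{m 0} ⊗ ⋯ ⊗ X_{m (k-1)} → X_l` represents the tree (bijection) `α`:
its pairing sends each node input (resp. the root marker) exactly where `α` does. -/
def Represents {k : ℕ} {m : Fin k → ℕ} {l : ℕ}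
    (ξ : KMGraph (domShape k m) (Xm l)) (α : TreeBij k m l) : Prop :=
  ∀ x, ξ.mate (srcv k m l x) = targ k m l (α x)

/-- Dual form: the graph `ξ : I → [X_{m 0} ⊗ ⋯ ⊗ X_{m (k-1)}, X_l]` represents the tree `α`. -/
def Represents' {k : ℕ} {m : Fin k → ℕ} {l : ℕ}
    (ξ : KMGraph .unit (.hom (domShape k m) (Xm l))) (α : TreeBij k m l) : Prop :=
  ∀ x, ξ.mate (Sum.inr (srcv k m l x)) = Sum.inr (targ k m l (α x))

/-!
Call an input `e'` a successor of an input `e` when `α` attaches `e'` to the output of the node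
owning `e`. A cyclic sequence of inputs, each a successor of the previous one, exists as soon as
some nonempty finite set of inputs gives each of its members a successor inside it: following
successors from any point of the set reaches a periodic orbit, whose inputs are pairwise distinct,
so such a cycle is in particular a closed loop. Conversely, along a closed loop the map sending
each edge to the node whose output it is attached to is injective (because `α` is), and its
`n + 1` values lie among the at most `n + 1` nodes of the loop; hence it reaches every node of the
loop, in particular the owner of each input of the loop, which gives that input a successor.
-/

open Function Set

theorem _root_.Function.exists_mem_periodicPts {β : Type*} [Finite β] [Nonempty β] (f : β → β) :
    ∃ x, x ∈ periodicPts f := by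
  obtain ⟨a, b, hab, hne⟩ : ∃ a b, f^[a] (Classical.arbitrary β) = f^[b] _ ∧ a ≠ b := by
    simpa [Injective] using not_injective_infinite_finite (f^[·] (Classical.arbitrary β))
  wlog hlt : a < b generalizing a b
  · exact this b a hab.symm hne.symm (by omega)
  refine ⟨f^[a] (Classical.arbitrary β), mk_mem_periodicPts (n := b - a) (by omega) ?_⟩
  rw [IsPeriodicPt, IsFixedPt, ← iterate_add_apply, Nat.sub_add_cancel hlt.le, hab]

theorem _root_.Finite.exists_injective_cycle {β : Type*} [Finite β] [Nonempty β]
    (r : β → β → Prop) (h : ∀ x, ∃ y, r x y) :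
    ∃ (n : ℕ) (c : Fin (n + 1) → β), Injective c ∧ ∀ j, r (c (j - 1)) (c j) := by
  choose σ hσ using h
  obtain ⟨x, hx⟩ := exists_mem_periodicPts σ
  obtain ⟨n, hn⟩ := Nat.exists_eq_add_one.mpr (minimalPeriod_pos_of_mem_periodicPts hx)
  refine ⟨n, fun j => σ^[j.val] x, fun a b hab => ?_, fun j => ?_⟩
  · exact Fin.ext ((iterate_eq_iterate_iff_of_lt_minimalPeriod
      (by rw [hn]; exact a.isLt) (by rw [hn]; exact b.isLt)).1 hab)
  · have hj : j.val = ((j - 1).val + 1) % (n + 1) := by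
      conv_lhs => rw [← sub_add_cancel j 1, Fin.val_add, Fin.val_one', Nat.add_mod_mod]
    have hstep : σ (σ^[(j - 1).val] x) = σ^[j.val] x := by
      have hper : IsPeriodicPt σ (n + 1) x := hn ▸ isPeriodicPt_minimalPeriod σ x
      rw [hj, hper.iterate_mod_apply, iterate_succ_apply']
    simpa only [hstep] using hσ (σ^[(j - 1).val] x)

theorem _root_.Set.Finite.exists_injective_cycle {β : Type*} {s : Set β} (hs : s.Finite)
    (hne : s.Nonempty) (r : β → β → Prop) (h : ∀ x ∈ s, ∃ y ∈ s, r x y) :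
    ∃ (n : ℕ) (c : Fin (n + 1) → β), Injective c ∧ ∀ j, r (c (j - 1)) (c j) := by
  have := hs.to_subtype
  have := hne.to_subtype
  obtain ⟨n, c, hc, hr⟩ := Finite.exists_injective_cycle (fun x y : s => r x y) fun x => by
    obtain ⟨y, hy, hxy⟩ := h x x.2
    exact ⟨⟨y, hy⟩, hxy⟩
  exact ⟨n, Subtype.val ∘ c, Subtype.val_injective.comp hc, hr⟩

theorem _root_.Set.range_eq_of_injective_of_range_subset {ι β : Type*} [Finite ι] {f g : ι → β}
    (hf : Injective f) (h : range f ⊆ range g) : range f = range g := by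
  refine eq_of_subset_of_ncard_le h ?_ (Set.finite_range g)
  rw [ncard_range_of_injective hf, ← image_univ, ← ncard_univ]
  exact ncard_image_le finite_univ

section Feeds

variable {k l : ℕ} {m : Fin k → ℕ}

def Feeds (α : TreeBij k m l) (e e' : Σ i : Fin k, Fin (m i)) : Prop :=
  α (Sum.inl e') = Sum.inl e.1

theorem hasLoop_iff_exists_cycle (α : TreeBij k m l) :
    HasLoop α ↔ ∃ (n : ℕ) (c : Fin (n + 1) → Σ i : Fin k, Fin (m i)),
      ∀ j, Feeds α (c (j - 1)) (c j) :=
  ⟨fun ⟨n, t, b, h⟩ => ⟨n, fun j => ⟨t j, b j⟩, h⟩,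
    fun ⟨n, c, h⟩ => ⟨n, fun j => (c j).1, fun j => (c j).2, h⟩⟩

theorem hasClosedLoop_of_injective_cycle {α : TreeBij k m l} {n : ℕ}
    {c : Fin (n + 1) → Σ i : Fin k, Fin (m i)} (hc : Injective c)
    (h : ∀ j, Feeds α (c (j - 1)) (c j)) : HasClosedLoop α :=
  ⟨n, fun j => (c (j - 1)).1, c, hc, fun j => Or.inr ⟨by simp only [add_sub_cancel_right], h j⟩⟩

theorem exists_feeds_of_closed_walk {α : TreeBij k m l} {n : ℕ} {v : Fin (n + 1) → Fin k}
    {e : Fin (n + 1) → Σ i : Fin k, Fin (m i)} (he : Injective e)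
    (hwalk : ∀ j, ((e j).1 = v j ∧ α (Sum.inl (e j)) = Sum.inl (v (j + 1))) ∨
      ((e j).1 = v (j + 1) ∧ α (Sum.inl (e j)) = Sum.inl (v j))) :
    ∀ x ∈ range e, ∃ y ∈ range e, Feeds α x y := by
  have hends : ∀ j, ∃ w, α (Sum.inl (e j)) = Sum.inl w ∧ w ∈ range v ∧ (e j).1 ∈ range v := by
    intro j
    rcases hwalk j with ⟨hsrc, htgt⟩ | ⟨hsrc, htgt⟩ <;>
      exact ⟨_, htgt, mem_range_self _, hsrc ▸ mem_range_self _⟩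
  choose head hhead hhead_mem hsrc_mem using hends
  have hhead_inj : Injective head := fun a b hab =>
    he (Sum.inl_injective (α.injective (by rw [hhead, hhead, hab])))
  have hrange : range head = range v :=
    range_eq_of_injective_of_range_subset hhead_inj (range_subset_iff.2 hhead_mem)
  rintro _ ⟨j, rfl⟩
  obtain ⟨j', hj'⟩ := hrange ▸ hsrc_mem j
  exact ⟨e j', mem_range_self _, by rw [Feeds, hhead, hj']⟩

end Feeds

/-- the graph on the nodes `N_1, …, N_k` defined by a bijection `α` contains a
closed loop if and only if there is a nonempty cyclic sequence of indices `t` with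
`α (x_{t_j, b_j}) = x_{t_{j-1}}` (cyclically). -/
theorem closed_loop_iff (k l : ℕ) (m : Fin k → ℕ) (α : TreeBij k m l) :
    HasClosedLoop α ↔ HasLoop α := by
  rw [hasLoop_iff_exists_cycle]
  constructor
  · rintro ⟨n, v, e, he, hwalk⟩
    obtain ⟨n', c, -, hc⟩ := (Set.finite_range e).exists_injective_cycle (range_nonempty e) _
      (exists_feeds_of_closed_walk he hwalk)
    exact ⟨n', c, hc⟩
  · rintro ⟨n, c, hc⟩
    obtain ⟨n', c', hinj, hc'⟩ := (Set.finite_range c).exists_injective_cycle (range_nonempty c) _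
      (by rintro _ ⟨j, rfl⟩; exact ⟨c (j + 1), mem_range_self _, by simpa using hc (j + 1)⟩)
    exact hasClosedLoop_of_injective_cycle hinj hc'

end KM
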